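/- arXiv:1410.7558 — 7 statements merged into one kernel-verified Lean document; each statement's English description precedes it below -/
import Mathlib

section
/- If the observability matrix O(T) = ∫₀ᵀ Φ(t)ᵀ Cᵀ C Φ(t) dt is nonsingular, then the final value E(T) of the Riccati solution is a nonsingular matrix. -/
open Matrix Set intervalIntegral
open scoped Matrix

noncomputable section

/-!
Let `E(T) v = 0` with `v ≠ 0` and let `x` solve the closed-loop equation `x' = (A + E / λ) x`
with `x(T) = v`. Along `x` the Riccati equation gives `(xᵀ E x)' = |C x|² + |E x|² / λ ≥ 0`,
while `xᵀ E x` is `≥ 0` at `t = 0` (as `Q ⪰ 0`) and `= 0` at `t = T`; hence `C x ≡ 0` and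
`E x ≡ 0` on `[0, T]`. Then `x' = A x`, so `x = Φ x(0)` with `x(0) ≠ 0`, and `C Φ(t) x(0) ≡ 0`
puts `x(0)` in the kernel of the observability Gramian.
-/

open scoped NNReal

section Existence

variable {F : Type*} [NormedAddCommGroup F] [NormedSpace ℝ F] {v : ℝ → F → F} {a b c : ℝ}

lemma IsIntegralCurveOn.exists_glue_Icc {γ₁ γ₂ : ℝ → F}
    (h₁ : IsIntegralCurveOn γ₁ v (Icc a c)) (h₂ : IsIntegralCurveOn γ₂ v (Icc c b))
    (hc : γ₁ c = γ₂ c) :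
    ∃ γ, EqOn γ γ₁ (Icc a c) ∧ EqOn γ γ₂ (Icc c b) ∧ IsIntegralCurveOn γ v (Icc a b) := by
  set γ := (Iic c).piecewise γ₁ γ₂
  have e₁ : EqOn γ γ₁ (Icc a c) := fun t ht => piecewise_eq_of_mem _ _ _ ht.2
  have e₂ : EqOn γ γ₂ (Icc c b) := fun t ht => by
    rcases ht.1.eq_or_lt with rfl | h
    · exact (piecewise_eq_of_mem _ _ _ self_mem_Iic).trans hc
    · exact piecewise_eq_of_notMem _ _ _ (not_le.2 h)
  have extend : ∀ {s : Set ℝ} {γ' : ℝ → F}, IsClosed s → EqOn γ γ' s →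
      IsIntegralCurveOn γ' v s → ∀ t, HasDerivWithinAt γ (v t (γ t)) s t := by
    intro s γ' hs he h t
    by_cases ht : t ∈ s
    · rw [he ht]
      exact (h t ht).congr he (he ht)
    · exact HasFDerivWithinAt.of_notMem_closure (by rwa [hs.closure_eq])
  refine ⟨γ, e₁, e₂, fun t _ => ?_⟩
  exact ((extend isClosed_Icc e₁ h₁ t).union (extend isClosed_Icc e₂ h₂ t)).mono
    Icc_subset_Icc_union_Icc

variable [CompleteSpace F] {K : ℝ≥0}

lemma exists_isIntegralCurveOn_Icc_of_mul_le_one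
    (hv : ∀ t ∈ Icc a b, LipschitzWith K (v t)) (hv0 : ∀ t ∈ Icc a b, v t 0 = 0)
    (hcont : ∀ x, ContinuousOn (v · x) (Icc a b)) (hab : 2 * K * (b - a) ≤ 1)
    {t₀ : ℝ} (ht₀ : t₀ ∈ Icc a b) (x₀ : F) :
    ∃ γ, γ t₀ = x₀ ∧ IsIntegralCurveOn γ v (Icc a b) := by
  -- on the ball of radius `‖x₀‖ + 1` about `x₀` the field is bounded by `K (2 ‖x₀‖ + 1)`
  have hpl : IsPicardLindelof v (tmin := a) (tmax := b) ⟨t₀, ht₀⟩ x₀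
      ⟨‖x₀‖ + 1, by positivity⟩ 0 ⟨K * (2 * ‖x₀‖ + 1), by positivity⟩ K :=
    { lipschitzOnWith := fun t ht => (hv t ht).lipschitzOnWith
      continuousOn := fun x _ => hcont x
      norm_le := fun t ht x hx => by
        have hvx : ‖v t x‖ ≤ K * ‖x‖ := by
          simpa [hv0 t ht] using (hv t ht).norm_sub_le x 0
        have hx' : ‖x‖ ≤ 2 * ‖x₀‖ + 1 := by
          have hxx₀ : ‖x - x₀‖ ≤ ‖x₀‖ + 1 := mem_closedBall_iff_norm.1 hx
          linarith [norm_le_norm_add_norm_sub' x x₀]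
        exact hvx.trans (mul_le_mul_of_nonneg_left hx' K.2)
      mul_max_le := by
        show K * (2 * ‖x₀‖ + 1) * max (b - t₀) (t₀ - a) ≤ ‖x₀‖ + 1 - 0
        rw [sub_zero]
        have hmax : max (b - t₀) (t₀ - a) ≤ b - a :=
          max_le (by linarith [ht₀.1]) (by linarith [ht₀.2])
        calc K * (2 * ‖x₀‖ + 1) * max (b - t₀) (t₀ - a)
            ≤ K * (2 * ‖x₀‖ + 1) * (b - a) := by gcongr
          _ = (2 * ‖x₀‖ + 1) / 2 * (2 * K * (b - a)) := by ring
          _ ≤ ‖x₀‖ + 1 := by nlinarith [norm_nonneg x₀] }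
  exact hpl.exists_eq_forall_mem_Icc_hasDerivWithinAt₀

lemma exists_isIntegralCurveOn_Icc
    (hv : ∀ t ∈ Icc a b, LipschitzWith K (v t)) (hv0 : ∀ t ∈ Icc a b, v t 0 = 0)
    (hcont : ∀ x, ContinuousOn (v · x) (Icc a b)) {t₀ : ℝ} (ht₀ : t₀ ∈ Icc a b) (x₀ : F) :
    ∃ γ, γ t₀ = x₀ ∧ IsIntegralCurveOn γ v (Icc a b) := by
  obtain ⟨n, hn⟩ := exists_nat_ge (2 * K * (b - a))
  induction n generalizing a b t₀ x₀ with
  | zero =>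
    exact exists_isIntegralCurveOn_Icc_of_mul_le_one hv hv0 hcont (hn.trans (by norm_num)) ht₀ x₀
  | succ n ih =>
    by_cases hab : 2 * K * (b - a) ≤ 1
    · exact exists_isIntegralCurveOn_Icc_of_mul_le_one hv hv0 hcont hab ht₀ x₀
    -- split off `[a, c]` of length `1 / (2K)`, on which the short-interval case applies
    have hK : 0 < (K : ℝ) := by
      by_contra! h
      nlinarith [le_antisymm h K.2, ht₀.1, ht₀.2]
    set c := a + 1 / (2 * K)
    have hac : 2 * K * (c - a) = 1 := by rw [add_sub_cancel_left]; field_simp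
    have hcb : 2 * K * (b - c) ≤ n := by push_cast at hn; linarith
    have hc : c ∈ Icc a b :=
      ⟨le_add_of_nonneg_right (by positivity), by nlinarith⟩
    have hsub₁ : Icc a c ⊆ Icc a b := Icc_subset_Icc_right hc.2
    have hsub₂ : Icc c b ⊆ Icc a b := Icc_subset_Icc_left hc.1
    have left := fun {t₀} (ht₀ : t₀ ∈ Icc a c) x₀ => exists_isIntegralCurveOn_Icc_of_mul_le_one
      (fun t ht => hv t (hsub₁ ht)) (fun t ht => hv0 t (hsub₁ ht))
      (fun x => (hcont x).mono hsub₁) hac.le ht₀ x₀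
    have right := fun {t₀} (ht₀ : t₀ ∈ Icc c b) x₀ => ih (fun t ht => hv t (hsub₂ ht))
      (fun t ht => hv0 t (hsub₂ ht)) (fun x => (hcont x).mono hsub₂) ht₀ x₀ hcb
    by_cases ht₀c : t₀ ≤ c
    · obtain ⟨γ₁, hγ₁, h₁⟩ := left ⟨ht₀.1, ht₀c⟩ x₀
      obtain ⟨γ₂, hγ₂, h₂⟩ := right ⟨le_rfl, hc.2⟩ (γ₁ c)
      obtain ⟨γ, e₁, -, h⟩ := h₁.exists_glue_Icc h₂ hγ₂.symm
      exact ⟨γ, (e₁ ⟨ht₀.1, ht₀c⟩).trans hγ₁, h⟩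
    · obtain ⟨γ₂, hγ₂, h₂⟩ := right ⟨(not_le.1 ht₀c).le, ht₀.2⟩ x₀
      obtain ⟨γ₁, hγ₁, h₁⟩ := left ⟨hc.1, le_rfl⟩ (γ₂ c)
      obtain ⟨γ, -, e₂, h⟩ := h₁.exists_glue_Icc h₂ hγ₁
      exact ⟨γ, (e₂ ⟨(not_le.1 ht₀c).le, ht₀.2⟩).trans hγ₂, h⟩

end Existence

section LinearODE

variable {n : Type*} [Fintype n] {M : ℝ → Matrix n n ℝ} {a b : ℝ}

attribute [local instance] Matrix.linftyOpNormedAddCommGroup in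
lemma exists_lipschitzWith_mulVec (hM : ContinuousOn M (Icc a b)) :
    ∃ K : ℝ≥0, ∀ t ∈ Icc a b, LipschitzWith K (M t *ᵥ ·) := by
  obtain ⟨R, hR⟩ := isCompact_Icc.exists_bound_of_continuousOn hM
  refine ⟨R.toNNReal, fun t ht => LipschitzWith.of_dist_le_mul fun x y => ?_⟩
  rw [dist_eq_norm, dist_eq_norm, ← mulVec_sub]
  exact (linfty_opNorm_mulVec _ _).trans
    (mul_le_mul_of_nonneg_right ((hR t ht).trans (Real.le_coe_toNNReal R)) (norm_nonneg _))

lemma exists_isIntegralCurveOn_mulVec (hM : ContinuousOn M (Icc a b)) {t₀ : ℝ}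
    (ht₀ : t₀ ∈ Icc a b) (x₀ : n → ℝ) :
    ∃ x, x t₀ = x₀ ∧ IsIntegralCurveOn x (fun t y => M t *ᵥ y) (Icc a b) :=
  have ⟨_, hK⟩ := exists_lipschitzWith_mulVec hM
  exists_isIntegralCurveOn_Icc hK (fun _ _ => mulVec_zero _)
    (fun _ => (continuous_id.matrix_mulVec continuous_const).comp_continuousOn hM) ht₀ x₀

lemma IsIntegralCurveOn.eqOn_of_mulVec (hM : ContinuousOn M (Icc a b)) {x y : ℝ → n → ℝ}
    (hx : IsIntegralCurveOn x (fun t z => M t *ᵥ z) (Icc a b))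
    (hy : IsIntegralCurveOn y (fun t z => M t *ᵥ z) (Icc a b)) (hxy : x a = y a) :
    EqOn x y (Icc a b) := by
  obtain ⟨K, hK⟩ := exists_lipschitzWith_mulVec hM
  have toIci : ∀ {z : ℝ → n → ℝ}, IsIntegralCurveOn z (fun t z => M t *ᵥ z) (Icc a b) →
      ∀ t ∈ Ico a b, HasDerivWithinAt z (M t *ᵥ z t) (Ici t) t := fun hz t ht =>
    (hz t (Ico_subset_Icc_self ht)).mono_of_mem_nhdsWithin (Icc_mem_nhdsGE_of_mem ht)
  exact ODE_solution_unique_of_mem_Icc_right (s := fun _ => univ)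
    (fun t ht => (hK t (Ico_subset_Icc_self ht)).lipschitzOnWith) hx.continuousOn (toIci hx)
    (fun _ _ => mem_univ _) hy.continuousOn (toIci hy) (fun _ _ => mem_univ _) hxy

end LinearODE

lemma eq_zero_of_hasDerivWithinAt_nonneg_of_le {f g : ℝ → ℝ} {a b : ℝ} (hab : a < b)
    (hf : ∀ t ∈ Icc a b, HasDerivWithinAt f (g t) (Icc a b) t)
    (hg : ∀ t ∈ Icc a b, 0 ≤ g t) (hfab : f b ≤ f a) : ∀ t ∈ Icc a b, g t = 0 := by
  have hmono : MonotoneOn f (Icc a b) := by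
    refine monotoneOn_of_hasDerivWithinAt_nonneg (convex_Icc a b)
      (fun t ht => (hf t ht).continuousWithinAt) (fun t ht => ?_)
      (fun t ht => hg t (interior_subset ht))
    exact (hf t (interior_subset ht)).mono interior_subset
  have hconst : EqOn f (fun _ => f a) (Icc a b) := fun t ht =>
    le_antisymm ((hmono ht (right_mem_Icc.2 hab.le) ht.2).trans hfab)
      (hmono (left_mem_Icc.2 hab.le) ht ht.1)
  intro t ht
  exact (uniqueDiffOn_Icc hab t ht).eq_deriv _ (hf t ht)
    ((hasDerivWithinAt_const t _ (f a)).congr hconst (hconst ht))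

section Calculus

variable {m n : Type*} [Fintype n] {s : Set ℝ} {t : ℝ}

protected lemma HasDerivWithinAt.dotProduct {u w : ℝ → n → ℝ} {u' w' : n → ℝ}
    (hu : HasDerivWithinAt u u' s t) (hw : HasDerivWithinAt w w' s t) :
    HasDerivWithinAt (fun τ => u τ ⬝ᵥ w τ) (u' ⬝ᵥ w t + u t ⬝ᵥ w') s t := by
  simpa [dotProduct, Finset.sum_add_distrib] using HasDerivWithinAt.fun_sum (u := Finset.univ)
    fun i _ => (hasDerivWithinAt_pi.1 hu i).mul (hasDerivWithinAt_pi.1 hw i)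

lemma HasDerivWithinAt.matrix_mulVec {M : ℝ → Matrix m n ℝ} {M' : Matrix m n ℝ}
    {w : ℝ → n → ℝ} {w' : n → ℝ}
    (hM : ∀ i j, HasDerivWithinAt (fun τ => M τ i j) (M' i j) s t)
    (hw : HasDerivWithinAt w w' s t) :
    HasDerivWithinAt (fun τ => M τ *ᵥ w τ) (M' *ᵥ w t + M t *ᵥ w') s t :=
  hasDerivWithinAt_pi.2 fun i => (hasDerivWithinAt_pi.2 (hM i)).dotProduct hw

end Calculus

lemma mulVec_dotProduct_mulVec {k n : Type*} [Fintype k] [Fintype n] (N P : Matrix k n ℝ)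
    (x : n → ℝ) : (N *ᵥ x) ⬝ᵥ (P *ᵥ x) = x ⬝ᵥ ((Nᵀ * P) *ᵥ x) := by
  rw [← mulVec_mulVec, dotProduct_mulVec x Nᵀ, vecMul_transpose]

lemma riccati_closedLoop_identity {m n : Type*} [Fintype m] [Fintype n] (C : Matrix m n ℝ)
    (A E : Matrix n n ℝ) (lam : ℝ) (x : n → ℝ) :
    ((A + (1 / lam) • E) *ᵥ x) ⬝ᵥ (E *ᵥ x)
      + x ⬝ᵥ ((Cᵀ * C - Aᵀ * E - E * A - (1 / lam) • (E * E)) *ᵥ x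
        + E *ᵥ ((A + (1 / lam) • E) *ᵥ x))
      = (C *ᵥ x) ⬝ᵥ (C *ᵥ x) + (1 / lam) * ((E *ᵥ x) ⬝ᵥ (E *ᵥ x)) := by
  rw [mulVec_dotProduct_mulVec, mulVec_dotProduct_mulVec, mulVec_dotProduct_mulVec,
    mulVec_mulVec]
  simp only [transpose_add, transpose_smul, add_mul, mul_add, smul_mul, Matrix.mul_smul,
    add_mulVec, sub_mulVec, smul_mulVec, dotProduct_add, dotProduct_sub, dotProduct_smul,
    smul_eq_mul]
  ring

lemma of_intervalIntegral_mulVec {m n : Type*} [Fintype n] {G : ℝ → Matrix m n ℝ} {a b : ℝ}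
    (hG : ∀ i j, IntervalIntegrable (fun t => G t i j) MeasureTheory.volume a b) (w : n → ℝ) :
    (of fun i j => ∫ t in a..b, G t i j) *ᵥ w = fun i => ∫ t in a..b, (G t *ᵥ w) i := by
  ext i
  simp only [mulVec, dotProduct, of_apply]
  rw [integral_finsetSum fun j _ => (hG i j).mul_const (w j)]
  simp only [integral_mul_const]

lemma observabilityGramian_mulVec_eq_zero {m n : Type*} [Fintype m] [Fintype n]
    {Φ : ℝ → Matrix n n ℝ} {a b : ℝ} (C : Matrix m n ℝ) (hab : a ≤ b)
    (hΦ : ContinuousOn Φ (Icc a b)) {w : n → ℝ} (hw : ∀ t ∈ Icc a b, C *ᵥ (Φ t *ᵥ w) = 0) :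
    (of fun i j => ∫ t in a..b, ((Φ t)ᵀ * Cᵀ * C * Φ t) i j) *ᵥ w = 0 := by
  have hG : ContinuousOn (fun t => (Φ t)ᵀ * Cᵀ * C * Φ t) (Icc a b) :=
    (((continuous_id.matrix_transpose.matrix_mul continuous_const).matrix_mul
      continuous_const).matrix_mul continuous_id).comp_continuousOn hΦ
  rw [of_intervalIntegral_mulVec fun i j => ContinuousOn.intervalIntegrable
    (by rw [uIcc_of_le hab]; exact (continuous_id.matrix_elem i j).comp_continuousOn hG)]
  ext i
  refine (integral_congr fun t ht => ?_).trans integral_zero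
  rw [uIcc_of_le hab] at ht
  simp [← mulVec_mulVec, hw t ht]

section Riccati

variable {m n : Type*} [Fintype m] [Fintype n] {a b lam : ℝ} {C : Matrix m n ℝ}
  {A E : ℝ → Matrix n n ℝ}

lemma riccati_closedLoop_mulVec_eq_zero (hab : a < b) (hlam : 0 < lam)
    (hE : ∀ t ∈ Icc a b, ∀ i j, HasDerivAt (fun s => E s i j)
      ((Cᵀ * C - (A t)ᵀ * E t - E t * A t - (1 / lam) • (E t * E t)) i j) t)
    {x : ℝ → n → ℝ}
    (hx : IsIntegralCurveOn x (fun t y => (A t + (1 / lam) • E t) *ᵥ y) (Icc a b))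
    (ha : 0 ≤ x a ⬝ᵥ (E a *ᵥ x a)) (hb : E b *ᵥ x b = 0) :
    ∀ t ∈ Icc a b, C *ᵥ x t = 0 ∧ E t *ᵥ x t = 0 := by
  have hderiv : ∀ t ∈ Icc a b, HasDerivWithinAt (fun s => x s ⬝ᵥ (E s *ᵥ x s))
      ((C *ᵥ x t) ⬝ᵥ (C *ᵥ x t) + (1 / lam) * ((E t *ᵥ x t) ⬝ᵥ (E t *ᵥ x t))) (Icc a b) t :=
    fun t ht => riccati_closedLoop_identity C (A t) (E t) lam (x t) ▸ (hx t ht).dotProduct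
      ((HasDerivWithinAt.matrix_mulVec fun i j => (hE t ht i j).hasDerivWithinAt) (hx t ht))
  have hnonneg : ∀ t ∈ Icc a b, 0 ≤ (C *ᵥ x t) ⬝ᵥ (C *ᵥ x t) ∧
      0 ≤ (1 / lam) * ((E t *ᵥ x t) ⬝ᵥ (E t *ᵥ x t)) := fun t _ =>
    ⟨Fintype.sum_nonneg fun _ => mul_self_nonneg _,
      mul_nonneg (by positivity) (Fintype.sum_nonneg fun _ => mul_self_nonneg _)⟩
  have hzero := eq_zero_of_hasDerivWithinAt_nonneg_of_le hab hderiv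
    (fun t ht => add_nonneg (hnonneg t ht).1 (hnonneg t ht).2) (by simpa [hb] using ha)
  intro t ht
  obtain ⟨hC, hE⟩ := (add_eq_zero_iff_of_nonneg (hnonneg t ht).1 (hnonneg t ht).2).1 (hzero t ht)
  exact ⟨dotProduct_self_eq_zero.1 hC,
    dotProduct_self_eq_zero.1 ((mul_eq_zero.1 hE).resolve_left (by positivity))⟩

end Riccati

theorem statement1_general
    (d d' : ℕ) (T : ℝ) (hT : 0 < T) (lam : ℝ) (hlam : 0 < lam)
    (C : Matrix (Fin d') (Fin d) ℝ)
    (A : ℝ → Matrix (Fin d) (Fin d) ℝ)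
    (hA : ∀ i j, ContinuousOn (fun t => A t i j) (Icc 0 T))
    (Q : Matrix (Fin d) (Fin d) ℝ) (hQ : Q.PosSemidef)
    (E : ℝ → Matrix (Fin d) (Fin d) ℝ)
    (hE0 : E 0 = Q)
    (hE : ∀ t ∈ Icc (0:ℝ) T, ∀ i j,
      HasDerivAt (fun s => E s i j)
        ((Cᵀ * C - (A t)ᵀ * E t - E t * A t - (1 / lam) • (E t * E t)) i j) t)
    (Φ : ℝ → Matrix (Fin d) (Fin d) ℝ)
    (hΦ0 : Φ 0 = 1)
    (hΦ : ∀ t ∈ Icc (0:ℝ) T, ∀ i j,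
      HasDerivAt (fun s => Φ s i j) ((A t * Φ t) i j) t)
    (hO : (Matrix.of fun i j => ∫ t in (0:ℝ)..T, ((Φ t)ᵀ * Cᵀ * C * Φ t) i j :
        Matrix (Fin d) (Fin d) ℝ).det ≠ 0) :
    (E T).det ≠ 0 := by
  intro hdet
  obtain ⟨v, hv, hEv⟩ := exists_mulVec_eq_zero_iff.2 hdet
  have hAc : ContinuousOn A (Icc 0 T) := continuousOn_pi.2 fun i => continuousOn_pi.2 (hA i)
  have hEc : ContinuousOn E (Icc 0 T) := continuousOn_pi.2 fun i => continuousOn_pi.2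
    fun j t ht => (hE t ht i j).continuousAt.continuousWithinAt
  have hΦc : ContinuousOn Φ (Icc 0 T) := continuousOn_pi.2 fun i => continuousOn_pi.2
    fun j t ht => (hΦ t ht i j).continuousAt.continuousWithinAt
  have hTmem : T ∈ Icc 0 T := right_mem_Icc.2 hT.le
  obtain ⟨x, hxT, hx⟩ :=
    exists_isIntegralCurveOn_mulVec (hAc.add (hEc.const_smul (1 / lam))) hTmem v
  have hQx : 0 ≤ x 0 ⬝ᵥ (E 0 *ᵥ x 0) := by simpa [hE0] using hQ.dotProduct_mulVec_nonneg (x 0)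
  have hCx := riccati_closedLoop_mulVec_eq_zero hT hlam hE hx hQx (hxT ▸ hEv)
  have hxA : IsIntegralCurveOn x (fun t y => A t *ᵥ y) (Icc 0 T) := fun t ht => by
    simpa [add_mulVec, smul_mulVec, (hCx t ht).2] using hx t ht
  have hΦx : IsIntegralCurveOn (fun t => Φ t *ᵥ x 0) (fun t y => A t *ᵥ y) (Icc 0 T) :=
    fun t ht => by
      simpa [mulVec_mulVec] using HasDerivWithinAt.matrix_mulVec
        (fun i j => (hΦ t ht i j).hasDerivWithinAt) (hasDerivWithinAt_const t _ (x 0))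
  have hxΦ := hxA.eqOn_of_mulVec hAc hΦx (by simp [hΦ0])
  have hx0 : x 0 ≠ 0 := fun h => hv (by simp [← hxT, hxΦ hTmem, h])
  exact hO (exists_mulVec_eq_zero_iff.1 ⟨x 0, hx0, observabilityGramian_mulVec_eq_zero C hT.le
    hΦc fun t ht => by simpa [hxΦ ht] using (hCx t ht).1⟩)

/-- if the observability matrix `O(T)` is nonsingular, then the final
value `E(T)` of the Riccati solution is nonsingular. -/
theorem statement1
    (d d' : ℕ) (hd : 1 ≤ d) (hd' : 1 ≤ d') (T : ℝ) (hT : 0 < T) (lam : ℝ) (hlam : 0 < lam)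
    (C : Matrix (Fin d') (Fin d) ℝ)
    (A : ℝ → Matrix (Fin d) (Fin d) ℝ)
    (hA : ∀ i j, ContinuousOn (fun t => A t i j) (Icc 0 T))
    (Q : Matrix (Fin d) (Fin d) ℝ) (hQ : Q.PosSemidef)
    (E : ℝ → Matrix (Fin d) (Fin d) ℝ)
    (hE0 : E 0 = Q)
    (hE : ∀ t ∈ Icc (0:ℝ) T, ∀ i j,
      HasDerivAt (fun s => E s i j)
        ((Cᵀ * C - (A t)ᵀ * E t - E t * A t - (1 / lam) • (E t * E t)) i j) t)
    (Φ : ℝ → Matrix (Fin d) (Fin d) ℝ)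
    (hΦ0 : Φ 0 = 1)
    (hΦ : ∀ t ∈ Icc (0:ℝ) T, ∀ i j,
      HasDerivAt (fun s => Φ s i j) ((A t * Φ t) i j) t)
    (hO : (Matrix.of fun i j => ∫ t in (0:ℝ)..T, ((Φ t)ᵀ * Cᵀ * C * Φ t) i j :
        Matrix (Fin d) (Fin d) ℝ).det ≠ 0) :
    (E T).det ≠ 0 :=
  statement1_general d d' T hT lam hlam C A hA Q hQ E hE0 hE Φ hΦ0 hΦ hO
end
end

section
/- If the initial value Q is a symmetric positive definite matrix, then E(t) is nonsingular for every t ∈ [0,T]. -/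
/-!
The Riccati flow preserves symmetry: `E - Eᵀ` solves a linear matrix ODE with zero initial
value, so it vanishes by Grönwall's inequality. On an interval where `E` stays positive
semidefinite, Jacobi's formula together with `tr (adj E * CᵀC) ≥ 0` gives
`(det E)' ≥ -(2 tr A + tr E / λ) det E`, hence `det E t ≥ det Q * exp (-K t) > 0`. So positive
semidefiniteness on `[0, τ]` upgrades to positive definiteness at `τ`, which persists a little
beyond `τ` because positive definiteness is open among symmetric matrices; since positive
semidefiniteness is a closed condition, continuous induction keeps `E` positive definite on
all of `[0, T]`.
-/

open Matrix Set Filter Topology Metric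

namespace Matrix

theorem continuousAt_of_hasDerivAt_apply {𝕜 m n : Type*} [NontriviallyNormedField 𝕜]
    {M : 𝕜 → Matrix m n 𝕜} {M' : Matrix m n 𝕜} {t : 𝕜}
    (h : ∀ i j, HasDerivAt (fun s => M s i j) (M' i j) t) : ContinuousAt M t :=
  continuousAt_pi.2 fun i => continuousAt_pi.2 fun j => (h i j).continuousAt

variable {n : Type*} [Fintype n]

theorem isClosed_setOf_posSemidef : IsClosed {M : Matrix n n ℝ | M.PosSemidef} := by
  simp_rw [posSemidef_iff_dotProduct_mulVec, ofPred_and, ofPred_forall]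
  refine (isClosed_eq continuous_id.matrix_conjTranspose continuous_id).inter
    (isClosed_iInter fun x => isClosed_le continuous_const ?_)
  fun_prop

theorem PosDef.of_forall_mem_sphere {M : Matrix n n ℝ} (hM : M.IsHermitian)
    (h : ∀ y ∈ sphere (0 : n → ℝ) 1, 0 < y ⬝ᵥ M *ᵥ y) : M.PosDef := by
  refine PosDef.of_dotProduct_mulVec_pos hM fun x hx => ?_
  have hx' : 0 < ‖x‖ := norm_pos_iff.2 hx
  have hy := h (‖x‖⁻¹ • x) (by simp [norm_smul, hx'.ne'])
  rw [mulVec_smul, dotProduct_smul, smul_dotProduct, smul_eq_mul, smul_eq_mul] at hy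
  simpa using pos_of_mul_pos_right (pos_of_mul_pos_right hy (by positivity)) (by positivity)

theorem PosDef.eventually_isHermitian_imp_posDef {M : Matrix n n ℝ} (hM : M.PosDef) :
    ∀ᶠ N in 𝓝 M, N.IsHermitian → N.PosDef := by
  have hpos : ∀ᶠ N in 𝓝 M, ∀ y ∈ sphere (0 : n → ℝ) 1, 0 < y ⬝ᵥ N *ᵥ y :=
    (isCompact_sphere 0 1).eventually_forall_of_forall_eventually fun y hy =>
      have hcont : Continuous fun p : Matrix n n ℝ × (n → ℝ) => p.2 ⬝ᵥ p.1 *ᵥ p.2 := by fun_prop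
      continuousAt_const.eventually_lt hcont.continuousAt
        (hM.dotProduct_mulVec_pos (ne_of_mem_sphere hy one_ne_zero))
  exact hpos.mono fun N hN hH => PosDef.of_forall_mem_sphere hH hN

variable [DecidableEq n]

theorem trace_adjugate_mul {R : Type*} [CommRing R] (M N : Matrix n n R) :
    trace (adjugate M * N) = ∑ i, (M.updateCol i fun k => N k i).det := by
  refine Finset.sum_congr rfl fun i _ => ?_
  rw [← cramer_apply, cramer_eq_adjugate_mulVec]
  rfl

theorem hasDerivAt_det {𝕜 : Type*} [NontriviallyNormedField 𝕜] {M : 𝕜 → Matrix n n 𝕜}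
    {M' : Matrix n n 𝕜} {t : 𝕜} (h : ∀ i j, HasDerivAt (fun s => M s i j) (M' i j) t) :
    HasDerivAt (fun s => (M s).det) (trace (adjugate (M t) * M')) t := by
  have hprod : ∀ σ : Equiv.Perm n, HasDerivAt (fun s => ∏ i, M s (σ i) i)
      (∑ i, ∏ j, (M t).updateCol i (fun k => M' k i) (σ j) j) t := by
    intro σ
    refine (HasDerivAt.fun_finsetProd (u := Finset.univ) fun i _ => h (σ i) i).congr_deriv
      (Finset.sum_congr rfl fun i _ => ?_)
    rw [← Finset.mul_prod_erase _ _ (Finset.mem_univ i), updateCol_self, smul_eq_mul, mul_comm]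
    congr 1
    exact Finset.prod_congr rfl fun j hj => (updateCol_ne (Finset.ne_of_mem_erase hj)).symm
  simp_rw [det_apply, trace_adjugate_mul, det_apply]
  rw [Finset.sum_comm]
  refine HasDerivAt.fun_sum fun σ _ => ?_
  rw [← Finset.smul_sum]
  exact (hprod σ).fun_const_smul _

open scoped ComplexOrder in
theorem PosSemidef.adjugate {𝕜 : Type*} [RCLike 𝕜] {A : Matrix n n 𝕜} (hA : A.PosSemidef) :
    A.adjugate.PosSemidef := by
  open scoped MatrixOrder in
  obtain ⟨B, rfl⟩ : ∃ B : Matrix n n 𝕜, A = Bᴴ * B :=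
    ⟨CFC.sqrt A, by rw [← star_eq_conjTranspose, (CFC.sqrt_nonneg A).isSelfAdjoint.star_eq,
      CFC.sqrt_mul_sqrt_self A hA.nonneg]⟩
  rw [adjugate_mul_distrib, ← adjugate_conjTranspose]
  exact posSemidef_self_mul_conjTranspose _

theorem eqOn_zero_of_hasDerivAt_mul_add_mul {F P R : ℝ → Matrix n n ℝ} {a b : ℝ}
    (hP : ContinuousOn P (Icc a b)) (hR : ContinuousOn R (Icc a b))
    (hF : ∀ t ∈ Icc a b, ∀ i j, HasDerivAt (fun s => F s i j) ((P t * F t + F t * R t) i j) t)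
    (ha : F a = 0) : EqOn F 0 (Icc a b) := by
  -- any submultiplicative norm makes `‖P F + F R‖ ≤ (‖P‖ + ‖R‖) ‖F‖` available for Grönwall
  let _ := Matrix.linftyOpNormedRing (n := n) (α := ℝ)
  let _ := Matrix.linftyOpNormedSpace (m := n) (n := n) (R := ℝ) (α := ℝ)
  obtain ⟨KP, hKP⟩ := isCompact_Icc.exists_bound_of_continuousOn hP
  obtain ⟨KR, hKR⟩ := isCompact_Icc.exists_bound_of_continuousOn hR
  let L : (n → n → ℝ) →L[ℝ] Matrix n n ℝ :=
    LinearMap.toContinuousLinearMap (ofLinearEquiv ℝ).toLinearMap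
  have hderiv : ∀ t ∈ Icc a b, HasDerivAt F (P t * F t + F t * R t) t := fun t ht =>
    L.hasFDerivAt.comp_hasDerivAt (f := fun s i j => F s i j) t
      (hasDerivAt_pi.2 fun i => hasDerivAt_pi.2 fun j => hF t ht i j)
  refine eq_zero_of_abs_deriv_le_mul_abs_self_of_eq_zero_right (K := KP + KR)
    (fun t ht => (hderiv t ht).continuousAt.continuousWithinAt)
    (fun t ht => (hderiv t (Ico_subset_Icc_self ht)).hasDerivWithinAt) ha fun t ht => ?_
  have ht' := Ico_subset_Icc_self ht
  calc ‖P t * F t + F t * R t‖ ≤ ‖P t‖ * ‖F t‖ + ‖F t‖ * ‖R t‖ :=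
        (norm_add_le _ _).trans (add_le_add (norm_mul_le _ _) (norm_mul_le _ _))
    _ ≤ KP * ‖F t‖ + ‖F t‖ * KR := by gcongr <;> [exact hKP t ht'; exact hKR t ht']
    _ = (KP + KR) * ‖F t‖ := by ring

end Matrix

theorem le_mul_exp_of_neg_mul_le_deriv {φ φ' : ℝ → ℝ} {K a b : ℝ}
    (hφ : ∀ t ∈ Icc a b, HasDerivAt φ (φ' t) t) (hK : ∀ t ∈ Icc a b, -K * φ t ≤ φ' t) :
    ∀ t ∈ Icc a b, φ a * Real.exp (-K * (t - a)) ≤ φ t := by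
  have hψ : ∀ t ∈ Icc a b, HasDerivAt (fun s => φ s * Real.exp (K * (s - a)))
      ((φ' t + K * φ t) * Real.exp (K * (t - a))) t := fun t ht =>
    ((hφ t ht).mul (((hasDerivAt_id t).sub_const a).const_mul K).exp).congr_deriv
      (by simp only [id]; ring)
  have hmono : MonotoneOn (fun s => φ s * Real.exp (K * (s - a))) (Icc a b) :=
    monotoneOn_of_hasDerivWithinAt_nonneg (convex_Icc a b)
      (fun t ht => (hψ t ht).continuousAt.continuousWithinAt)
      (fun t ht => (hψ t (interior_subset ht)).hasDerivWithinAt)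
      (fun t ht => mul_nonneg (by linarith [hK t (interior_subset ht)]) (Real.exp_pos _).le)
  intro t ht
  have := hmono (left_mem_Icc.2 (ht.1.trans ht.2)) ht ht.1
  simp only [sub_self, mul_zero, Real.exp_zero, mul_one] at this
  calc φ a * Real.exp (-K * (t - a)) ≤ φ t * Real.exp (K * (t - a)) * Real.exp (-K * (t - a)) :=
        mul_le_mul_of_nonneg_right this (Real.exp_pos _).le
    _ = φ t := by rw [mul_assoc, ← Real.exp_add, neg_mul, add_neg_cancel, Real.exp_zero, mul_one]

section Riccati

variable {n m : Type*} [Fintype n] [DecidableEq n] [Fintype m]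

noncomputable def riccatiField (C : Matrix m n ℝ) (A X : Matrix n n ℝ) (lam : ℝ) : Matrix n n ℝ :=
  Cᵀ * C - Aᵀ * X - X * A - (1 / lam) • (X * X)

theorem riccatiField_sub_transpose (C : Matrix m n ℝ) (A X : Matrix n n ℝ) (lam : ℝ) :
    riccatiField C A X lam - (riccatiField C A X lam)ᵀ =
      -(Aᵀ + (1 / lam) • X) * (X - Xᵀ) + (X - Xᵀ) * -(A + (1 / lam) • Xᵀ) := by
  simp only [riccatiField, transpose_sub, transpose_mul, transpose_transpose, transpose_smul]
  simp only [mul_sub, sub_mul, mul_add, add_mul, mul_neg, neg_mul, smul_mul_assoc, mul_smul_comm,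
    smul_sub]
  abel

theorem trace_adjugate_mul_riccatiField (C : Matrix m n ℝ) (A X : Matrix n n ℝ) (lam : ℝ) :
    trace (adjugate X * riccatiField C A X lam) =
      trace (adjugate X * (Cᵀ * C)) - (2 * trace A + trace X / lam) * det X := by
  have hAX : trace (adjugate X * (Aᵀ * X)) = det X * trace A := by
    rw [← Matrix.mul_assoc, trace_mul_comm, ← Matrix.mul_assoc, mul_adjugate, smul_mul,
      Matrix.one_mul, trace_smul, trace_transpose, smul_eq_mul]
  have hXA : ∀ B, trace (adjugate X * (X * B)) = det X * trace B := fun B => by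
    rw [← Matrix.mul_assoc, adjugate_mul, smul_mul, Matrix.one_mul, trace_smul, smul_eq_mul]
  simp only [riccatiField, Matrix.mul_sub, mul_smul_comm, trace_sub, trace_smul, hAX, hXA,
    smul_eq_mul]
  ring

theorem neg_mul_det_le_trace_adjugate_mul_riccatiField (C : Matrix m n ℝ) (A : Matrix n n ℝ)
    {X : Matrix n n ℝ} (hX : X.PosSemidef) (lam : ℝ) :
    -(2 * trace A + trace X / lam) * det X ≤ trace (adjugate X * riccatiField C A X lam) := by
  have h : 0 ≤ trace (adjugate X * (Cᵀ * C)) := by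
    rw [← Matrix.mul_assoc, trace_mul_cycle]
    simpa [conjTranspose_eq_transpose_of_trivial] using
      (hX.adjugate.mul_mul_conjTranspose_same C).trace_nonneg
  rw [trace_adjugate_mul_riccatiField]
  linarith

variable {C : Matrix m n ℝ} {A E : ℝ → Matrix n n ℝ} {lam T : ℝ}

theorem riccati_isHermitian (hA : ContinuousOn A (Icc 0 T))
    (hE : ∀ t ∈ Icc 0 T, ∀ i j,
      HasDerivAt (fun s => E s i j) (riccatiField C (A t) (E t) lam i j) t)
    (h0 : (E 0).IsHermitian) : ∀ t ∈ Icc 0 T, (E t).IsHermitian := by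
  have hEc : ContinuousOn E (Icc 0 T) := fun t ht =>
    (continuousAt_of_hasDerivAt_apply (hE t ht)).continuousWithinAt
  have hF := eqOn_zero_of_hasDerivAt_mul_add_mul (F := fun t => E t - (E t)ᵀ)
    (P := fun t => -((A t)ᵀ + (1 / lam) • E t)) (R := fun t => -(A t + (1 / lam) • (E t)ᵀ))
    (by fun_prop) (by fun_prop) (fun t ht i j => by
      rw [← riccatiField_sub_transpose C]
      exact (hE t ht i j).sub (hE t ht j i))
    (sub_eq_zero.2 (isHermitian_iff_isSymm.1 h0).symm)
  exact fun t ht => isHermitian_iff_isSymm.2 (sub_eq_zero.1 (hF ht)).symm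

theorem riccati_det_ge {K τ : ℝ}
    (hE : ∀ t ∈ Icc 0 τ, ∀ i j,
      HasDerivAt (fun s => E s i j) (riccatiField C (A t) (E t) lam i j) t)
    (hK : ∀ t ∈ Icc 0 τ, 2 * trace (A t) + trace (E t) / lam ≤ K)
    (hpsd : ∀ t ∈ Icc 0 τ, (E t).PosSemidef) :
    ∀ t ∈ Icc 0 τ, det (E 0) * Real.exp (-K * t) ≤ det (E t) := by
  simpa using le_mul_exp_of_neg_mul_le_deriv (fun t ht => hasDerivAt_det (hE t ht)) fun t ht =>
    calc -K * det (E t) ≤ -(2 * trace (A t) + trace (E t) / lam) * det (E t) :=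
          mul_le_mul_of_nonneg_right (neg_le_neg (hK t ht)) (hpsd t ht).det_nonneg
      _ ≤ _ := neg_mul_det_le_trace_adjugate_mul_riccatiField C (A t) (hpsd t ht) lam

theorem riccati_posDef (hA : ContinuousOn A (Icc 0 T))
    (hE : ∀ t ∈ Icc 0 T, ∀ i j,
      HasDerivAt (fun s => E s i j) (riccatiField C (A t) (E t) lam i j) t)
    (h0 : (E 0).PosDef) : ∀ t ∈ Icc 0 T, (E t).PosDef := by
  have hEc : ∀ t ∈ Icc 0 T, ContinuousAt E t := fun t ht =>
    continuousAt_of_hasDerivAt_apply (hE t ht)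
  have hEc' : ContinuousOn E (Icc 0 T) := fun t ht => (hEc t ht).continuousWithinAt
  have hherm := riccati_isHermitian hA hE h0.isHermitian
  obtain ⟨K, hK⟩ : BddAbove ((fun t => 2 * trace (A t) + trace (E t) / lam) '' Icc 0 T) :=
    isCompact_Icc.bddAbove_image (by fun_prop)
  have hpd_of_psd : ∀ τ ∈ Icc 0 T, (∀ t ∈ Icc 0 τ, (E t).PosSemidef) → (E τ).PosDef := by
    intro τ hτ hpsd
    have hsub : Icc 0 τ ⊆ Icc 0 T := Icc_subset_Icc_right hτ.2
    have hdet := riccati_det_ge (fun t ht => hE t (hsub ht))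
      (fun t ht => hK (mem_image_of_mem _ (hsub ht))) hpsd τ (right_mem_Icc.2 hτ.1)
    exact (hpsd τ (right_mem_Icc.2 hτ.1)).posDef_iff_det_ne_zero.2
      ((mul_pos h0.det_pos (Real.exp_pos _)).trans_le hdet).ne'
  have hpsd : Icc 0 T ⊆ {t | (E t).PosSemidef} := by
    refine IsClosed.Icc_subset_of_forall_mem_nhdsGT_of_Icc_subset ?_ h0.posSemidef
      fun τ hτ hpsd => ?_
    · rw [inter_comm]
      exact hEc'.preimage_isClosed_of_isClosed isClosed_Icc isClosed_setOf_posSemidef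
    · have hτ' := Ico_subset_Icc_self hτ
      have hev : ∀ᶠ t in 𝓝[>] τ, (E t).IsHermitian → (E t).PosDef :=
        ((hEc τ hτ').tendsto.mono_left nhdsWithin_le_nhds).eventually
          (hpd_of_psd τ hτ' hpsd).eventually_isHermitian_imp_posDef
      filter_upwards [hev, Icc_mem_nhdsGT_of_mem hτ] with t hPD hIcc
      exact (hPD (hherm t hIcc)).posSemidef
  exact fun t ht => hpd_of_psd t ht fun s hs => hpsd (Icc_subset_Icc_right ht.2 hs)

end Riccati

theorem statement2_general
    (d d' : ℕ) (T : ℝ) (lam : ℝ)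
    (C : Matrix (Fin d') (Fin d) ℝ)
    (A : ℝ → Matrix (Fin d) (Fin d) ℝ)
    (hA : ∀ i j, ContinuousOn (fun t => A t i j) (Icc 0 T))
    (Q : Matrix (Fin d) (Fin d) ℝ) (hQ : Q.PosDef)
    (E : ℝ → Matrix (Fin d) (Fin d) ℝ)
    (hE0 : E 0 = Q)
    (hE : ∀ t ∈ Icc (0:ℝ) T, ∀ i j,
      HasDerivAt (fun s => E s i j)
        ((Cᵀ * C - (A t)ᵀ * E t - E t * A t - (1 / lam) • (E t * E t)) i j) t) :
    ∀ t ∈ Icc (0:ℝ) T, (E t).det ≠ 0 := by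
  have hA' : ContinuousOn A (Icc 0 T) := continuousOn_pi.2 fun i => continuousOn_pi.2 (hA i)
  exact fun t ht => (riccati_posDef hA' hE (hE0 ▸ hQ) t ht).det_pos.ne'

/-- if the initial value `Q` of the Riccati equation is symmetric positive
definite, then `E(t)` is nonsingular for every `t ∈ [0,T]`. -/
theorem statement2
    (d d' : ℕ) (hd : 1 ≤ d) (hd' : 1 ≤ d') (T : ℝ) (hT : 0 < T) (lam : ℝ) (hlam : 0 < lam)
    (C : Matrix (Fin d') (Fin d) ℝ)
    (A : ℝ → Matrix (Fin d) (Fin d) ℝ)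
    (hA : ∀ i j, ContinuousOn (fun t => A t i j) (Icc 0 T))
    (Q : Matrix (Fin d) (Fin d) ℝ) (hQ : Q.PosDef)
    (E : ℝ → Matrix (Fin d) (Fin d) ℝ)
    (hE0 : E 0 = Q)
    (hE : ∀ t ∈ Icc (0:ℝ) T, ∀ i j,
      HasDerivAt (fun s => E s i j)
        ((Cᵀ * C - (A t)ᵀ * E t - E t * A t - (1 / lam) • (E t * E t)) i j) t) :
    ∀ t ∈ Icc (0:ℝ) T, (E t).det ≠ 0 :=
  statement2_general d d' T lam C A hA Q hQ E hE0 hE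
end

section
/- For every t ∈ [0,T], the matrix E(t) is symmetric, i.e. E(t)ᵀ = E(t). -/
open Matrix Set intervalIntegral
open scoped Matrix

noncomputable section

/-- Auxiliary: a matrix-valued function with continuous entries on `Icc 0 T` has
uniformly bounded entries there. -/
lemma aux_exists_entry_bound {d : ℕ} {T : ℝ} (F : ℝ → Matrix (Fin d) (Fin d) ℝ)
    (h : ∀ i j, ContinuousOn (fun t => F t i j) (Icc 0 T)) :
    ∃ K : ℝ, 0 ≤ K ∧ ∀ t ∈ Icc (0:ℝ) T, ∀ i j, |F t i j| ≤ K := by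
  have hS : ContinuousOn (fun t => ∑ i : Fin d, ∑ j : Fin d, |F t i j|) (Icc 0 T) := by
    apply continuousOn_finset_sum
    intro i _
    apply continuousOn_finset_sum
    intro j _
    exact (h i j).abs
  obtain ⟨B, hB⟩ := isCompact_Icc.exists_bound_of_continuousOn hS
  refine ⟨max B 0, le_max_right _ _, fun t ht i j => ?_⟩
  have h1 : |F t i j| ≤ ∑ j' : Fin d, |F t i j'| :=
    Finset.single_le_sum (f := fun j' => |F t i j'|) (fun j' _ => abs_nonneg _)
      (Finset.mem_univ j)
  have h1' : (∑ j' : Fin d, |F t i j'|) ≤ ∑ i' : Fin d, ∑ j' : Fin d, |F t i' j'| :=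
    Finset.single_le_sum (f := fun i' => ∑ j' : Fin d, |F t i' j'|)
      (fun i' _ => Finset.sum_nonneg fun j' _ => abs_nonneg _) (Finset.mem_univ i)
  have h2 := hB t ht
  have h3 : (∑ i' : Fin d, ∑ j' : Fin d, |F t i' j'|) ≤ B := (le_abs_self _).trans h2
  exact h1.trans (h1'.trans (h3.trans (le_max_left _ _)))

/-- Auxiliary matrix identity: the skew part of the Riccati right-hand side. -/
lemma aux_riccati_transpose {d : ℕ} (P X B : Matrix (Fin d) (Fin d) ℝ) (hP : Pᵀ = P) (c : ℝ) :
    (P - Bᵀ * X - X * B - c • (X * X))ᵀ - (P - Bᵀ * X - X * B - c • (X * X)) =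
      -(Bᵀ * (Xᵀ - X)) - (Xᵀ - X) * B - c • (Xᵀ * (Xᵀ - X) + (Xᵀ - X) * X) := by
  simp only [Matrix.transpose_sub, Matrix.transpose_mul, Matrix.transpose_smul,
    Matrix.transpose_transpose, hP, mul_sub, sub_mul, smul_sub, smul_add]
  abel

/-- the Riccati solution `E(t)` is a symmetric matrix for every
`t ∈ [0,T]`. -/
theorem statement4
    (d d' : ℕ) (hd : 1 ≤ d) (hd' : 1 ≤ d') (T : ℝ) (hT : 0 < T) (lam : ℝ) (hlam : 0 < lam)
    (C : Matrix (Fin d') (Fin d) ℝ)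
    (A : ℝ → Matrix (Fin d) (Fin d) ℝ)
    (hA : ∀ i j, ContinuousOn (fun t => A t i j) (Icc 0 T))
    (Q : Matrix (Fin d) (Fin d) ℝ) (hQ : Q.PosSemidef)
    (E : ℝ → Matrix (Fin d) (Fin d) ℝ)
    (hE0 : E 0 = Q)
    (hE : ∀ t ∈ Icc (0:ℝ) T, ∀ i j,
      HasDerivAt (fun s => E s i j)
        ((Cᵀ * C - (A t)ᵀ * E t - E t * A t - (1 / lam) • (E t * E t)) i j) t) :
    ∀ t ∈ Icc (0:ℝ) T, (E t)ᵀ = E t := by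
  -- entries of E are continuous on the interval
  have hEcont : ∀ i j, ContinuousOn (fun t => E t i j) (Icc 0 T) := fun i j t ht =>
    (hE t ht i j).continuousAt.continuousWithinAt
  -- uniform entry bounds
  obtain ⟨KA, hKA0, hKA⟩ := aux_exists_entry_bound A hA
  obtain ⟨KE, hKE0, hKE⟩ := aux_exists_entry_bound E hEcont
  set K : ℝ := 2 * d * (KA + KE / lam) with hKdef
  have hK0 : 0 ≤ K := by
    apply mul_nonneg (by positivity)
    have := div_nonneg hKE0 hlam.le
    linarith
  -- the skew part and its derivative, as plain Pi-type functions
  set g : ℝ → Fin d → Fin d → ℝ := fun t i j => E t j i - E t i j with hg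
  set g' : ℝ → Fin d → Fin d → ℝ := fun t i j =>
    (-((A t)ᵀ * ((E t)ᵀ - E t)) - ((E t)ᵀ - E t) * A t
      - (1 / lam) • ((E t)ᵀ * ((E t)ᵀ - E t) + ((E t)ᵀ - E t) * E t)) i j with hg'
  -- derivative of g
  have hderiv : ∀ t ∈ Icc (0:ℝ) T, HasDerivAt g (g' t) t := by
    intro t ht
    rw [hasDerivAt_pi]
    intro i
    rw [hasDerivAt_pi]
    intro j
    have h1 : HasDerivAt (fun s => E s j i - E s i j)
        ((Cᵀ * C - (A t)ᵀ * E t - E t * A t - (1 / lam) • (E t * E t)) j i -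
          (Cᵀ * C - (A t)ᵀ * E t - E t * A t - (1 / lam) • (E t * E t)) i j) t :=
      (hE t ht j i).sub (hE t ht i j)
    have h3 := congrFun (congrFun (aux_riccati_transpose (Cᵀ * C) (E t) (A t)
        (by rw [Matrix.transpose_mul, Matrix.transpose_transpose]) (1 / lam)) i) j
    rw [Matrix.sub_apply, Matrix.transpose_apply] at h3
    have h2 : (Cᵀ * C - (A t)ᵀ * E t - E t * A t - (1 / lam) • (E t * E t)) j i -
          (Cᵀ * C - (A t)ᵀ * E t - E t * A t - (1 / lam) • (E t * E t)) i j = g' t i j := by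
      rw [hg']
      exact h3
    have h5 : (fun s => g s i j) = fun s => E s j i - E s i j := rfl
    rw [h5, ← h2]
    exact h1
  -- continuity of g
  have hgc : ContinuousOn g (Icc 0 T) := by
    apply continuousOn_pi.2
    intro i
    apply continuousOn_pi.2
    intro j
    exact (hEcont j i).sub (hEcont i j)
  -- initial condition
  have hg0 : g 0 = 0 := by
    funext i j
    have hsym : Q j i = Q i j := by
      have h := congrFun (congrFun hQ.1 i) j
      rw [Matrix.conjTranspose_apply] at h
      simpa using h
    show E 0 j i - E 0 i j = 0
    rw [hE0, hsym, sub_self]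
  -- norm bound on the derivative
  have hbound : ∀ t ∈ Ico (0:ℝ) T, ‖g' t‖ ≤ K * ‖g t‖ + 0 := by
    intro t ht
    have ht' : t ∈ Icc (0:ℝ) T := ⟨ht.1, ht.2.le⟩
    rw [add_zero]
    have hKg : 0 ≤ K * ‖g t‖ := mul_nonneg hK0 (norm_nonneg _)
    rw [pi_norm_le_iff_of_nonneg hKg]
    intro i
    rw [pi_norm_le_iff_of_nonneg hKg]
    intro j
    -- entry of g bounded by ‖g t‖
    have hDg : ∀ i' j', |E t j' i' - E t i' j'| ≤ ‖g t‖ := by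
      intro i' j'
      calc |E t j' i' - E t i' j'| = ‖g t i' j'‖ := rfl
        _ ≤ ‖g t i'‖ := norm_le_pi_norm (g t i') j'
        _ ≤ ‖g t‖ := norm_le_pi_norm (g t) i'
    have hval : g' t i j = -(∑ k, A t k i * (E t j k - E t k j))
        - (∑ k, (E t k i - E t i k) * A t k j)
        - (1 / lam) * ((∑ k, E t k i * (E t j k - E t k j))
          + (∑ k, (E t k i - E t i k) * E t k j)) := by
      rw [hg']
      simp [Matrix.sub_apply, Matrix.neg_apply, Matrix.add_apply,
        Matrix.smul_apply, Matrix.mul_apply, Matrix.transpose_apply, smul_eq_mul, mul_add]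
    have hsum1 : |∑ k, A t k i * (E t j k - E t k j)| ≤ d * (KA * ‖g t‖) := by
      calc |∑ k, A t k i * (E t j k - E t k j)| ≤ ∑ k, |A t k i * (E t j k - E t k j)| :=
            Finset.abs_sum_le_sum_abs _ _
        _ ≤ ∑ _k : Fin d, KA * ‖g t‖ := by
            apply Finset.sum_le_sum
            intro k _
            rw [abs_mul]
            exact mul_le_mul (hKA t ht' k i) (hDg k j) (abs_nonneg _) hKA0
        _ = d * (KA * ‖g t‖) := by simp [Finset.sum_const, Finset.card_univ, nsmul_eq_mul]
    have hsum2 : |∑ k, (E t k i - E t i k) * A t k j| ≤ d * (KA * ‖g t‖) := by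
      calc |∑ k, (E t k i - E t i k) * A t k j| ≤ ∑ k, |(E t k i - E t i k) * A t k j| :=
            Finset.abs_sum_le_sum_abs _ _
        _ ≤ ∑ _k : Fin d, KA * ‖g t‖ := by
            apply Finset.sum_le_sum
            intro k _
            rw [abs_mul, mul_comm]
            exact mul_le_mul (hKA t ht' k j) (hDg i k) (abs_nonneg _) hKA0
        _ = d * (KA * ‖g t‖) := by simp [Finset.sum_const, Finset.card_univ, nsmul_eq_mul]
    have hsum3 : |∑ k, E t k i * (E t j k - E t k j)| ≤ d * (KE * ‖g t‖) := by
      calc |∑ k, E t k i * (E t j k - E t k j)| ≤ ∑ k, |E t k i * (E t j k - E t k j)| :=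
            Finset.abs_sum_le_sum_abs _ _
        _ ≤ ∑ _k : Fin d, KE * ‖g t‖ := by
            apply Finset.sum_le_sum
            intro k _
            rw [abs_mul]
            exact mul_le_mul (hKE t ht' k i) (hDg k j) (abs_nonneg _) hKE0
        _ = d * (KE * ‖g t‖) := by simp [Finset.sum_const, Finset.card_univ, nsmul_eq_mul]
    have hsum4 : |∑ k, (E t k i - E t i k) * E t k j| ≤ d * (KE * ‖g t‖) := by
      calc |∑ k, (E t k i - E t i k) * E t k j| ≤ ∑ k, |(E t k i - E t i k) * E t k j| :=
            Finset.abs_sum_le_sum_abs _ _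
        _ ≤ ∑ _k : Fin d, KE * ‖g t‖ := by
            apply Finset.sum_le_sum
            intro k _
            rw [abs_mul, mul_comm]
            exact mul_le_mul (hKE t ht' k j) (hDg i k) (abs_nonneg _) hKE0
        _ = d * (KE * ‖g t‖) := by simp [Finset.sum_const, Finset.card_univ, nsmul_eq_mul]
    have hc : (0:ℝ) < 1 / lam := by positivity
    obtain ⟨hs1l, hs1u⟩ := abs_le.1 hsum1
    obtain ⟨hs2l, hs2u⟩ := abs_le.1 hsum2
    obtain ⟨hs3l, hs3u⟩ := abs_le.1 hsum3
    obtain ⟨hs4l, hs4u⟩ := abs_le.1 hsum4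
    have hup : (1 / lam) * ((∑ k, E t k i * (E t j k - E t k j))
          + (∑ k, (E t k i - E t i k) * E t k j))
        ≤ (1 / lam) * (d * (KE * ‖g t‖) + d * (KE * ‖g t‖)) :=
      mul_le_mul_of_nonneg_left (by linarith) hc.le
    have hlo : (1 / lam) * (-(d * (KE * ‖g t‖)) + -(d * (KE * ‖g t‖)))
        ≤ (1 / lam) * ((∑ k, E t k i * (E t j k - E t k j))
          + (∑ k, (E t k i - E t i k) * E t k j)) :=
      mul_le_mul_of_nonneg_left (by linarith) hc.le
    have hKeq : K * ‖g t‖ = 2 * (d * (KA * ‖g t‖))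
        + (1 / lam) * (d * (KE * ‖g t‖) + d * (KE * ‖g t‖)) := by
      rw [hKdef]
      field_simp
      ring
    rw [hval, Real.norm_eq_abs, abs_le]
    constructor
    · rw [hKeq]
      have h6 : (1 / lam) * (d * (KE * ‖g t‖) + d * (KE * ‖g t‖))
          = -((1 / lam) * (-(d * (KE * ‖g t‖)) + -(d * (KE * ‖g t‖)))) := by ring
      linarith [hlo]
    · rw [hKeq]
      linarith [hup]
  -- Grönwall
  have hgron := norm_le_gronwallBound_of_norm_deriv_right_le (δ := 0) hgc
    (fun t ht => (hderiv t ⟨ht.1, ht.2.le⟩).hasDerivWithinAt)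
    (by rw [hg0]; simp) hbound
  intro t ht
  have hle : ‖g t‖ ≤ 0 := by
    have h := hgron t ht
    rwa [gronwallBound_ε0, zero_mul] at h
  have hgt0 : g t = 0 := norm_eq_zero.mp (le_antisymm hle (norm_nonneg _))
  ext i j
  have h := congrFun (congrFun hgt0 i) j
  have h' : E t j i - E t i j = 0 := h
  rw [Matrix.transpose_apply]
  linarith
end
end

section
/- The 6×3 Kalman matrix obtained by stacking C, CA, CA² on top of each other, which equals the matrix with rows (0,1,0), (0,0,1), (k₁,0,0), (k₂,0,0), (−k₁(k₁+k₂),0,0), (−k₂(k₁+k₂),0,0), has rank 3 if and only if k₁ ≠ 0 or k₂ ≠ 0. -/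
/-!
`A` has a single nonzero column, so `A² = -(k₁ + k₂) • A`; hence the blocks `C`, `CA`, `CA²` of the
Kalman matrix are explicit, and its kernel consists of the vectors `(x, 0, 0)` with `k₁ x = k₂ x = 0`.
The Kalman matrix therefore has full column rank exactly when `k₁` and `k₂` do not both vanish.
-/

open Matrix

theorem Matrix.rank_eq_card_width_iff_mulVec_injective {m n F : Type*} [Field F] [Fintype n]
    (M : Matrix m n F) : M.rank = Fintype.card n ↔ Function.Injective M.mulVec := by
  rw [mulVec_injective_iff, linearIndependent_iff_card_eq_finrank_span, rank_eq_finrank_span_cols,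
    Set.finrank, eq_comm]

theorem Matrix.stacked_row_eq {α : Type*} {m p n : ℕ} {K : Matrix (Fin (m * p)) (Fin n) α}
    {B : Fin m → Matrix (Fin p) (Fin n) α}
    (hK : ∀ (j : Fin m) (i : Fin p) (k : Fin n),
      K ⟨p * (j : ℕ) + (i : ℕ), by nlinarith [j.2, i.2]⟩ k = B j i k)
    (r : Fin (m * p)) :
    K r = B ⟨r / p, Nat.div_lt_of_lt_mul (lt_of_lt_of_eq r.2 (mul_comm m p))⟩
      ⟨r % p, Nat.mod_lt _ (Nat.pos_of_mul_pos_left (Nat.zero_lt_of_lt r.2))⟩ := by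
  ext k
  rw [← hK]
  congr
  exact Fin.ext (Nat.div_add_mod r p).symm

namespace ToyModel

section CommRing

variable {R : Type*} [CommRing R] (k₁ k₂ : R)

abbrev A : Matrix (Fin 3) (Fin 3) R := !![-(k₁ + k₂), 0, 0; k₁, 0, 0; k₂, 0, 0]

variable (R) in
abbrev C : Matrix (Fin 2) (Fin 3) R := !![0, 1, 0; 0, 0, 1]

abbrev kalman : Matrix (Fin 6) (Fin 3) R :=
  !![0, 1, 0; 0, 0, 1; k₁, 0, 0; k₂, 0, 0; -(k₁ * (k₁ + k₂)), 0, 0; -(k₂ * (k₁ + k₂)), 0, 0]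

theorem A_sq : A k₁ k₂ ^ 2 = -(k₁ + k₂) • A k₁ k₂ := by
  ext i j
  fin_cases i <;> fin_cases j <;> simp [sq, mul_apply, Fin.sum_univ_succ] <;> ring

theorem C_mul_A : C R * A k₁ k₂ = !![k₁, 0, 0; k₂, 0, 0] := by
  simp

theorem C_mul_A_sq : C R * A k₁ k₂ ^ 2 = !![-(k₁ * (k₁ + k₂)), 0, 0; -(k₂ * (k₁ + k₂)), 0, 0] := by
  rw [A_sq, Matrix.mul_smul, C_mul_A]
  ext i j
  fin_cases i <;> fin_cases j <;> simp <;> ring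

theorem eq_kalman_of_rows {K : Matrix (Fin 6) (Fin 3) R}
    (hK : ∀ r : Fin 6, K r = (C R * A k₁ k₂ ^ (r / 2 : ℕ)) ⟨r % 2, Nat.mod_lt _ two_pos⟩) :
    K = kalman k₁ k₂ := by
  ext r c
  rw [hK r]
  fin_cases r <;>
    simp only [Fin.reduceFinMk, Fin.isValue, Nat.reduceDiv, Nat.reduceMod, pow_zero, pow_one,
      Matrix.mul_one, C_mul_A, C_mul_A_sq] <;>
    fin_cases c <;> rfl

theorem kalman_mulVec (v : Fin 3 → R) :
    kalman k₁ k₂ *ᵥ v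
      = ![v 1, v 2, k₁ * v 0, k₂ * v 0, -(k₁ * (k₁ + k₂)) * v 0, -(k₂ * (k₁ + k₂)) * v 0] := by
  ext i
  fin_cases i <;> simp [mulVec, dotProduct, Fin.sum_univ_succ]

end CommRing

theorem kalman_mulVec_injective_iff {F : Type*} [Field F] (k₁ k₂ : F) :
    Function.Injective (kalman k₁ k₂).mulVec ↔ k₁ ≠ 0 ∨ k₂ ≠ 0 := by
  rw [← Matrix.coe_mulVecLin, injective_iff_map_eq_zero]
  simp only [mulVecLin_apply, kalman_mulVec]
  constructor
  · intro h
    by_contra! hk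
    obtain ⟨rfl, rfl⟩ := hk
    have := congrFun (h ![1, 0, 0] (by simp)) 0
    simp at this
  · intro hk v hv
    simp only [cons_eq_zero_iff, mul_eq_zero] at hv
    obtain ⟨h1, h2, h01, h02, -⟩ := hv
    have h0 : v 0 = 0 := by
      rcases hk with hk | hk
      exacts [h01.resolve_left hk, h02.resolve_left hk]
    ext i
    fin_cases i <;> assumption

end ToyModel

/-- for the toy model, the 6×3 Kalman matrix obtained by stacking
`C, CA, CA²` equals the explicit matrix with rows `(0,1,0)`, `(0,0,1)`, `(k₁,0,0)`,
`(k₂,0,0)`, `(−k₁(k₁+k₂),0,0)`, `(−k₂(k₁+k₂),0,0)`, and it has rank 3 iff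
`k₁ ≠ 0` or `k₂ ≠ 0`. -/
theorem statement5
    (k₁ k₂ : ℝ)
    (A : Matrix (Fin 3) (Fin 3) ℝ)
    (hA : A = !![-(k₁ + k₂), 0, 0; k₁, 0, 0; k₂, 0, 0])
    (C : Matrix (Fin 2) (Fin 3) ℝ)
    (hC : C = !![0, 1, 0; 0, 0, 1])
    (K : Matrix (Fin 6) (Fin 3) ℝ)
    (hK : ∀ (j : Fin 3) (i : Fin 2) (k : Fin 3),
      K ⟨2 * (j : ℕ) + (i : ℕ), by have := j.2; have := i.2; omega⟩ k
        = (C * A ^ (j : ℕ)) i k) :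
    K = !![0, 1, 0; 0, 0, 1; k₁, 0, 0; k₂, 0, 0;
           -(k₁ * (k₁ + k₂)), 0, 0; -(k₂ * (k₁ + k₂)), 0, 0]
    ∧ (K.rank = 3 ↔ (k₁ ≠ 0 ∨ k₂ ≠ 0)) := by
  subst hA hC
  have hKeq : K = ToyModel.kalman k₁ k₂ :=
    ToyModel.eq_kalman_of_rows k₁ k₂ (stacked_row_eq (m := 3) hK)
  refine ⟨hKeq, ?_⟩
  rw [hKeq, ← ToyModel.kalman_mulVec_injective_iff, ← rank_eq_card_width_iff_mulVec_injective,
    Fintype.card_fin]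
end

section
/- Suppose k₂ ≠ 0, k₁ + k₂ ≠ 0 and x₀,₁ ≠ 0 (the first coordinate of x₀ is nonzero). If C(A')ʲ x₀' = C Aʲ x₀ for j = 0, 1, 2, then k₁' = k₁, k₂' = k₂ and x₀' = x₀. -/
open Matrix Set
open scoped Matrix

noncomputable section

/-! Only the first compartment has an outflow, so `A x` is `x 0` times the first column
`(-(k₁ + k₂), k₁, k₂)` of `A`, and every higher power just rescales it by `-(k₁ + k₂)`.
Hence the observations are `(x 1, x 2)`, `x 0 • (k₁, k₂)` and `-(k₁ + k₂) x 0 • (k₁, k₂)`.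
The second coordinates of the last two give `k₁ + k₂` (using `k₂ x 0 ≠ 0`); the sum of the
coordinates of the middle one then gives `x 0`, and from it `k₁` and `k₂`. -/

section Compartment

variable {R : Type*} [CommRing R]

def compartmentMatrix (k₁ k₂ : R) : Matrix (Fin 3) (Fin 3) R :=
  !![-(k₁ + k₂), 0, 0; k₁, 0, 0; k₂, 0, 0]

def outputMatrix : Matrix (Fin 2) (Fin 3) R :=
  !![0, 1, 0; 0, 0, 1]

theorem outputMatrix_mulVec (v : Fin 3 → R) : outputMatrix *ᵥ v = ![v 1, v 2] := by
  ext i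
  fin_cases i <;> simp [outputMatrix, mulVec, dotProduct, Fin.sum_univ_succ]

theorem compartmentMatrix_mulVec (k₁ k₂ : R) (x : Fin 3 → R) :
    compartmentMatrix k₁ k₂ *ᵥ x = x 0 • ![-(k₁ + k₂), k₁, k₂] := by
  ext i
  fin_cases i <;> simp [compartmentMatrix, mulVec, dotProduct, Fin.sum_univ_succ, mul_comm]

theorem compartmentMatrix_pow_succ_mulVec (k₁ k₂ : R) (x : Fin 3 → R) (j : ℕ) :
    compartmentMatrix k₁ k₂ ^ (j + 1) *ᵥ x = ((-(k₁ + k₂)) ^ j * x 0) • ![-(k₁ + k₂), k₁, k₂] := by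
  induction j with
  | zero => simp [compartmentMatrix_mulVec]
  | succ j ih =>
    rw [pow_succ', ← mulVec_mulVec, ih, mulVec_smul, compartmentMatrix_mulVec, smul_smul]
    simp only [Fin.isValue, cons_val_zero, pow_succ]
    ring_nf

end Compartment

theorem eq_of_output_moments {K : Type*} [Field K] {k₁ k₂ k₁' k₂' a a' : K}
    (hk₂ : k₂ ≠ 0) (hsum : k₁ + k₂ ≠ 0) (ha : a ≠ 0)
    (h₁ : a' * k₁' = a * k₁) (h₂ : a' * k₂' = a * k₂)
    (h₃ : (k₁' + k₂') * a' * k₂' = (k₁ + k₂) * a * k₂) :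
    k₁' = k₁ ∧ k₂' = k₂ ∧ a' = a := by
  have hsum' : k₁' + k₂' = k₁ + k₂ := by
    rw [mul_assoc, mul_assoc, h₂] at h₃
    exact mul_right_cancel₀ (mul_ne_zero ha hk₂) h₃
  have ha' : a' = a := by
    have : (k₁ + k₂) * a' = (k₁ + k₂) * a := by
      linear_combination h₁ + h₂ - a' * hsum'
    exact mul_left_cancel₀ hsum this
  subst ha'
  exact ⟨mul_left_cancel₀ ha h₁, mul_left_cancel₀ ha h₂, rfl⟩

/-- identifiability of the toy model from the first three output
derivatives. If `k₂ ≠ 0`, `k₁ + k₂ ≠ 0` and the first coordinate of `x₀` is nonzero,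
and if `C (A')ʲ x₀' = C Aʲ x₀` for `j = 0, 1, 2`, then the parameters and initial
condition coincide. -/
theorem statement6
    (k₁ k₂ k₁' k₂' : ℝ) (x₀ x₀' : Fin 3 → ℝ)
    (A A' : Matrix (Fin 3) (Fin 3) ℝ)
    (hA : A = !![-(k₁ + k₂), 0, 0; k₁, 0, 0; k₂, 0, 0])
    (hA' : A' = !![-(k₁' + k₂'), 0, 0; k₁', 0, 0; k₂', 0, 0])
    (C : Matrix (Fin 2) (Fin 3) ℝ)
    (hC : C = !![0, 1, 0; 0, 0, 1])
    (hk₂ : k₂ ≠ 0) (hsum : k₁ + k₂ ≠ 0) (hx₀ : x₀ 0 ≠ 0)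
    (hobs : ∀ j : ℕ, j ≤ 2 →
      C.mulVec ((A' ^ j).mulVec x₀') = C.mulVec ((A ^ j).mulVec x₀)) :
    k₁' = k₁ ∧ k₂' = k₂ ∧ x₀' = x₀ := by
  obtain rfl : A = compartmentMatrix k₁ k₂ := hA
  obtain rfl : A' = compartmentMatrix k₁' k₂' := hA'
  obtain rfl : C = outputMatrix := hC
  have h₀ := hobs 0 (by norm_num)
  have h₁ := hobs (0 + 1) (by norm_num)
  have h₂ := hobs (1 + 1) (by norm_num)
  simp only [outputMatrix_mulVec, pow_zero, one_mulVec, compartmentMatrix_pow_succ_mulVec,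
    smul_cons, smul_eq_mul, cons_val, vecCons_inj, and_true, pow_one, one_mul, neg_mul,
    neg_inj] at h₀ h₁ h₂
  obtain ⟨rfl, rfl, hx₀'⟩ := eq_of_output_moments hk₂ hsum hx₀ h₁.1 h₁.2 h₂.2
  refine ⟨rfl, rfl, funext fun i => ?_⟩
  fin_cases i
  exacts [hx₀', h₀.1, h₀.2]
end
end

section
/- Let Ā ≥ 0 and Ē ≥ 0 be such that ‖A(t)‖ ≤ Ā and ‖E(t)‖ ≤ Ē for all t ∈ [0,T]. Then for every t ∈ [0,T]: ‖E(t)‖ ≤ (‖Q‖ + T‖C‖²) · e^{2√d (Ā + Ē/λ) T}. -/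
open Matrix Set intervalIntegral
open scoped Matrix

noncomputable section

/-- Frobenius norm of a real matrix. -/
def frob {m n : Type*} [Fintype m] [Fintype n] (M : Matrix m n ℝ) : ℝ :=
  Real.sqrt (∑ i, ∑ j, (M i j) ^ 2)

section frobAux

attribute [local instance] Matrix.frobeniusSeminormedAddCommGroup Matrix.frobeniusNormedSpace

variable {m n k : Type*} [Fintype m] [Fintype n] [Fintype k]

lemma frob_eq_norm (M : Matrix m n ℝ) : frob M = ‖M‖ := by
  rw [Matrix.frobenius_norm_def, frob, Real.sqrt_eq_rpow]
  congr 1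
  refine Finset.sum_congr rfl fun i _ => Finset.sum_congr rfl fun j _ => ?_
  rw [Real.norm_eq_abs, Real.rpow_two, sq_abs]

lemma frob_nonneg (M : Matrix m n ℝ) : 0 ≤ frob M := Real.sqrt_nonneg _

lemma frob_mul_le (M : Matrix m n ℝ) (N : Matrix n k ℝ) :
    frob (M * N) ≤ frob M * frob N := by
  simp only [frob_eq_norm]; exact Matrix.frobenius_norm_mul M N

lemma frob_transpose (M : Matrix m n ℝ) : frob Mᵀ = frob M := by
  simp only [frob_eq_norm]; exact Matrix.frobenius_norm_transpose M

lemma frob_smul (c : ℝ) (M : Matrix m n ℝ) : frob (c • M) = |c| * frob M := by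
  simp only [frob_eq_norm]
  rw [norm_smul, Real.norm_eq_abs]

lemma frob_sub_le (M N : Matrix m n ℝ) : frob (M - N) ≤ frob M + frob N := by
  simp only [frob_eq_norm]; exact norm_sub_le M N

end frobAux

lemma euclid_norm_eq_frob {d : ℕ} (M : Matrix (Fin d) (Fin d) ℝ) :
    ‖((EuclideanSpace.equiv (Fin d × Fin d) ℝ).symm (fun p => M p.1 p.2))‖ = frob M := by
  rw [EuclideanSpace.norm_eq, frob]
  congr 1
  rw [Fintype.sum_prod_type]
  refine Finset.sum_congr rfl fun i _ => Finset.sum_congr rfl fun j _ => ?_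
  simp [Real.norm_eq_abs, sq_abs]

lemma gronwallBound_le_aux {δ K ε T t : ℝ} (hδ : 0 ≤ δ) (hK : 0 ≤ K) (hε : 0 ≤ ε)
    (ht : 0 ≤ t) (htT : t ≤ T) :
    gronwallBound δ K ε t ≤ (δ + T * ε) * Real.exp (K * T) := by
  have hT : 0 ≤ T := le_trans ht htT
  rcases eq_or_lt_of_le hK with hK0 | hKpos
  · rw [← hK0, gronwallBound_K0]
    simp only [zero_mul, Real.exp_zero, mul_one]
    nlinarith
  · rw [gronwallBound_of_K_ne_0 (ne_of_gt hKpos)]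
    have hx : 0 ≤ K * t := mul_nonneg hK ht
    have e3 : (0:ℝ) < Real.exp (K * t) := Real.exp_pos _
    have hinv : Real.exp (-(K * t)) * Real.exp (K * t) = 1 := by
      rw [← Real.exp_add]; simp
    have haux := Real.add_one_le_exp (-(K * t))
    have e1 : Real.exp (K * t) - 1 ≤ K * t * Real.exp (K * t) := by nlinarith
    have e2 : Real.exp (K * t) ≤ Real.exp (K * T) :=
      Real.exp_le_exp.2 (by nlinarith)
    have h5 : ε / K * (Real.exp (K * t) - 1) ≤ ε * (t * Real.exp (K * t)) := by
      rw [div_mul_eq_mul_div, div_le_iff₀ hKpos]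
      nlinarith
    have e0 : (0:ℝ) < Real.exp (K * T) := Real.exp_pos _
    nlinarith [mul_le_mul_of_nonneg_left e2 hδ,
      mul_le_mul_of_nonneg_left (mul_le_mul htT e2 (le_of_lt e3) hT) hε]

set_option maxHeartbeats 1600000 in
/-- a priori bound on the Riccati solution:
`‖E(t)‖ ≤ (‖Q‖ + T‖C‖²) e^{2√d (Ā + Ē/λ) T}`. -/
theorem statement8
    (d d' : ℕ) (hd : 1 ≤ d) (hd' : 1 ≤ d') (T : ℝ) (hT : 0 < T) (lam : ℝ) (hlam : 0 < lam)
    (C : Matrix (Fin d') (Fin d) ℝ)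
    (A : ℝ → Matrix (Fin d) (Fin d) ℝ)
    (hA : ∀ i j, ContinuousOn (fun t => A t i j) (Icc 0 T))
    (Q : Matrix (Fin d) (Fin d) ℝ) (hQ : Q.PosSemidef)
    (E : ℝ → Matrix (Fin d) (Fin d) ℝ)
    (hE0 : E 0 = Q)
    (hE : ∀ t ∈ Icc (0:ℝ) T, ∀ i j,
      HasDerivAt (fun s => E s i j)
        ((Cᵀ * C - (A t)ᵀ * E t - E t * A t - (1 / lam) • (E t * E t)) i j) t)
    (Abar Ebar : ℝ) (hAbar : 0 ≤ Abar) (hEbar : 0 ≤ Ebar)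
    (hAb : ∀ t ∈ Icc (0:ℝ) T, frob (A t) ≤ Abar)
    (hEb : ∀ t ∈ Icc (0:ℝ) T, frob (E t) ≤ Ebar) :
    ∀ t ∈ Icc (0:ℝ) T,
      frob (E t) ≤ (frob Q + T * frob C ^ 2) *
        Real.exp (2 * Real.sqrt d * (Abar + Ebar / lam) * T) := by
  have hsqrt : (1:ℝ) ≤ Real.sqrt d := by
    rw [show (1:ℝ) = Real.sqrt 1 by simp]
    exact Real.sqrt_le_sqrt (by exact_mod_cast hd)
  set K : ℝ := 2 * Real.sqrt d * (Abar + Ebar / lam) with hKdef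
  have hKnn : 0 ≤ K := by
    apply mul_nonneg (by positivity)
    have : 0 ≤ Ebar / lam := div_nonneg hEbar (le_of_lt hlam)
    linarith
  set δ : ℝ := frob Q with hδdef
  set ε : ℝ := frob C ^ 2 with hεdef
  set R : ℝ → Matrix (Fin d) (Fin d) ℝ :=
    fun s => Cᵀ * C - (A s)ᵀ * E s - E s * A s - (1 / lam) • (E s * E s) with hRdef
  set F : ℝ → EuclideanSpace ℝ (Fin d × Fin d) :=
    fun s => (EuclideanSpace.equiv (Fin d × Fin d) ℝ).symm (fun p => E s p.1 p.2) with hFdef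
  set F' : ℝ → EuclideanSpace ℝ (Fin d × Fin d) :=
    fun s => (EuclideanSpace.equiv (Fin d × Fin d) ℝ).symm (fun p => R s p.1 p.2) with hF'def
  have hFnorm : ∀ s, ‖F s‖ = frob (E s) := fun s => euclid_norm_eq_frob (E s)
  have hF'norm : ∀ s, ‖F' s‖ = frob (R s) := fun s => euclid_norm_eq_frob (R s)
  have hderiv : ∀ s ∈ Icc (0:ℝ) T, HasDerivAt F (F' s) s := by
    intro s hs
    have hG : HasDerivAt (fun u => (fun p : Fin d × Fin d => E u p.1 p.2))
        (fun p : Fin d × Fin d => R s p.1 p.2) s :=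
      hasDerivAt_pi.2 (fun p => hE s hs p.1 p.2)
    exact (((EuclideanSpace.equiv (Fin d × Fin d) ℝ).symm :
        ((Fin d × Fin d) → ℝ) →L[ℝ] EuclideanSpace ℝ (Fin d × Fin d)).hasFDerivAt.comp_hasDerivAt
        s hG)
  have hcont : ContinuousOn F (Icc 0 T) := fun s hs =>
    ((hderiv s hs).continuousAt).continuousWithinAt
  have hbound : ∀ s ∈ Ico (0:ℝ) T, ‖F' s‖ ≤ K * ‖F s‖ + ε := by
    intro s hs
    have hs' : s ∈ Icc (0:ℝ) T := Ico_subset_Icc_self hs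
    rw [hF'norm, hFnorm]
    have hEs : frob (E s) ≤ Ebar := hEb s hs'
    have hAs : frob (A s) ≤ Abar := hAb s hs'
    have hEnn := frob_nonneg (E s)
    have hAnn := frob_nonneg (A s)
    have h1 : frob (R s) ≤ frob (Cᵀ * C) + frob ((A s)ᵀ * E s) + frob (E s * A s)
        + frob ((1 / lam) • (E s * E s)) := by
      calc frob (R s) ≤ frob (Cᵀ * C - (A s)ᵀ * E s - E s * A s)
            + frob ((1 / lam) • (E s * E s)) := frob_sub_le _ _
        _ ≤ frob (Cᵀ * C - (A s)ᵀ * E s) + frob (E s * A s)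
            + frob ((1 / lam) • (E s * E s)) := by
            linarith [frob_sub_le (Cᵀ * C - (A s)ᵀ * E s) (E s * A s)]
        _ ≤ _ := by linarith [frob_sub_le (Cᵀ * C) ((A s)ᵀ * E s)]
    have h2 : frob (Cᵀ * C) ≤ ε := by
      rw [hεdef, sq]
      calc frob (Cᵀ * C) ≤ frob Cᵀ * frob C := frob_mul_le _ _
        _ = frob C * frob C := by rw [frob_transpose]
    have h3 : frob ((A s)ᵀ * E s) ≤ Abar * frob (E s) := by
      calc frob ((A s)ᵀ * E s) ≤ frob (A s)ᵀ * frob (E s) := frob_mul_le _ _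
        _ = frob (A s) * frob (E s) := by rw [frob_transpose]
        _ ≤ Abar * frob (E s) := by nlinarith
    have h4 : frob (E s * A s) ≤ frob (E s) * Abar := by
      calc frob (E s * A s) ≤ frob (E s) * frob (A s) := frob_mul_le _ _
        _ ≤ frob (E s) * Abar := by nlinarith
    have h5 : frob ((1 / lam) • (E s * E s)) ≤ (1 / lam) * (frob (E s) * Ebar) := by
      rw [frob_smul, abs_of_pos (by positivity : (0:ℝ) < 1 / lam)]
      have := frob_mul_le (E s) (E s)
      have h6 : frob (E s * E s) ≤ frob (E s) * Ebar := by nlinarith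
      have : (0:ℝ) ≤ 1 / lam := by positivity
      nlinarith
    have hK2 : (2 * Abar + Ebar / lam) * frob (E s) ≤ K * frob (E s) := by
      apply mul_le_mul_of_nonneg_right _ hEnn
      rw [hKdef]
      have h7 : 0 ≤ Ebar / lam := div_nonneg hEbar (le_of_lt hlam)
      nlinarith
    have h8 : (1 / lam) * (frob (E s) * Ebar) = (Ebar / lam) * frob (E s) := by
      field_simp
    calc frob (R s) ≤ ε + Abar * frob (E s) + frob (E s) * Abar
          + (1 / lam) * (frob (E s) * Ebar) := by linarith
      _ = (2 * Abar + Ebar / lam) * frob (E s) + ε := by rw [h8]; ring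
      _ ≤ K * frob (E s) + ε := by linarith
  have hF0 : ‖F 0‖ ≤ δ := by rw [hFnorm, hE0]
  have hgron := norm_le_gronwallBound_of_norm_deriv_right_le hcont
    (fun x hx => (hderiv x (Ico_subset_Icc_self hx)).hasDerivWithinAt) hF0 hbound
  intro t ht
  have := hgron t ht
  rw [hFnorm, sub_zero] at this
  refine le_trans this ?_
  exact gronwallBound_le_aux (frob_nonneg Q) hKnn (by positivity) ht.1 ht.2
end
end

section
/- For every x₀ ∈ ℝ^d, every continuous control u : [0,T] → ℝ^d and every differentiable x : [0,T] → ℝ^d with x(0) = x₀ and x'(t) = A(t)x(t) + r(t) + u(t) for all t, the cost satisfies: x₀ᵀQx₀ + ∫₀ᵀ ‖ζ(t) − Cx(t)‖² dt + λ ∫₀ᵀ ‖u(t)‖² dt ≥ S, where S = ∫₀ᵀ (‖ζ(t)‖² − 2 r(t)ᵀ h(t) − (1/λ)‖h(t)‖²) dt − h(T)ᵀ E(T)⁻¹ h(T). -/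
/-!
Completing the square. Along any admissible trajectory put `V t = x(t)ᵀ E(t) x(t) + 2 h(t)ᵀ x(t)`.
The Riccati equation for `E` and the linear equation for `h` cancel every term involving `A`, and
`V'` equals the running cost `‖ζ - C x‖² + λ‖u‖²` minus the integrand of `S` minus
`λ ‖u - (E x + h)/λ‖²`. Integrating over `[0, T]` bounds `V T - V 0` by the cost minus the
integral in `S`; here `V 0 = x₀ᵀ Q x₀`, and since `E(T)` is positive definite the quadratic
`V T` is at least its minimum `-h(T)ᵀ E(T)⁻¹ h(T)`.
-/

open Matrix Set intervalIntegral
open scoped Matrix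

noncomputable section

/-- Euclidean norm of a real vector. -/
def evnorm {n : Type*} [Fintype n] (v : n → ℝ) : ℝ :=
  Real.sqrt (∑ i, (v i) ^ 2)

section

variable {m n : Type*} [Fintype m] [Fintype n]

theorem evnorm_sq (v : n → ℝ) : evnorm v ^ 2 = v ⬝ᵥ v := by
  rw [evnorm, Real.sq_sqrt (Finset.sum_nonneg fun i _ => sq_nonneg _)]
  simp [dotProduct, sq]

@[fun_prop]
theorem continuous_evnorm : Continuous (evnorm : (n → ℝ) → ℝ) := by
  unfold evnorm
  fun_prop

theorem Matrix.IsSymm.dotProduct_mulVec_comm {M : Matrix n n ℝ} (hM : M.IsSymm) (v w : n → ℝ) :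
    v ⬝ᵥ M *ᵥ w = w ⬝ᵥ M *ᵥ v := by
  simpa [hM.eq] using dotProduct_transpose_mulVec M v w

theorem Matrix.PosDef.neg_dotProduct_inv_mulVec_le [DecidableEq n] {M : Matrix n n ℝ}
    (hM : M.PosDef) (y b : n → ℝ) : -(b ⬝ᵥ M⁻¹ *ᵥ b) ≤ y ⬝ᵥ M *ᵥ y + 2 * (b ⬝ᵥ y) := by
  have hMM : M *ᵥ M⁻¹ *ᵥ b = b := by
    rw [mulVec_mulVec, mul_nonsing_inv _ ((isUnit_iff_isUnit_det M).1 hM.isUnit), one_mulVec]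
  have hsymm : M.IsSymm := hM.isHermitian
  have hsq := hM.posSemidef.dotProduct_mulVec_nonneg (y + M⁻¹ *ᵥ b)
  simp only [star_trivial, mulVec_add, hMM, dotProduct_add, add_dotProduct] at hsq
  rw [hsymm.dotProduct_mulVec_comm (M⁻¹ *ᵥ b) y, hMM, dotProduct_comm y b,
    dotProduct_comm _ b] at hsq
  linarith

theorem riccati_completing_square {lam : ℝ} (hlam : lam ≠ 0) (C : Matrix m n ℝ)
    (A E : Matrix n n ℝ) (hE : E.IsSymm) (x r u h : n → ℝ) (z : m → ℝ) :
    (A *ᵥ x + r + u) ⬝ᵥ E *ᵥ x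
      + x ⬝ᵥ ((Cᵀ * C - Aᵀ * E - E * A - (1 / lam) • (E * E)) *ᵥ x + E *ᵥ (A *ᵥ x + r + u))
      + 2 * ((-((Aᵀ + (1 / lam) • E) *ᵥ h) - (Cᵀ *ᵥ z + E *ᵥ r)) ⬝ᵥ x
        + h ⬝ᵥ (A *ᵥ x + r + u))
    = evnorm (z - C *ᵥ x) ^ 2 + lam * evnorm u ^ 2
      - (evnorm z ^ 2 - 2 * (r ⬝ᵥ h) - (1 / lam) * evnorm h ^ 2)
      - lam * evnorm (u - (1 / lam) • (E *ᵥ x + h)) ^ 2 := by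
  simp only [evnorm_sq, add_mulVec, sub_mulVec, smul_mulVec, ← mulVec_mulVec, mulVec_add,
    dotProduct_add, add_dotProduct, dotProduct_sub, sub_dotProduct, dotProduct_smul,
    smul_dotProduct, neg_dotProduct, smul_eq_mul]
  -- `simp` uses the two permutative rules as ordered rewrites, which normalises every pairing.
  simp only [dotProduct_comm, hE.dotProduct_mulVec_comm, dotProduct_transpose_mulVec]
  field_simp
  ring

end

section

variable {m n : Type*} [Fintype n] {t : ℝ}

theorem hasDerivAt_dotProduct {v w : ℝ → n → ℝ} {v' w' : n → ℝ}
    (hv : ∀ i, HasDerivAt (fun s => v s i) (v' i) t)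
    (hw : ∀ i, HasDerivAt (fun s => w s i) (w' i) t) :
    HasDerivAt (fun s => v s ⬝ᵥ w s) (v' ⬝ᵥ w t + v t ⬝ᵥ w') t := by
  simp only [dotProduct, ← Finset.sum_add_distrib]
  exact HasDerivAt.fun_sum fun i _ => (hv i).mul (hw i)

theorem hasDerivAt_mulVec {M : ℝ → Matrix m n ℝ} {M' : Matrix m n ℝ} {w : ℝ → n → ℝ}
    {w' : n → ℝ} (hM : ∀ i j, HasDerivAt (fun s => M s i j) (M' i j) t)
    (hw : ∀ j, HasDerivAt (fun s => w s j) (w' j) t) (i : m) :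
    HasDerivAt (fun s => (M s *ᵥ w s) i) ((M' *ᵥ w t + M t *ᵥ w') i) t :=
  hasDerivAt_dotProduct (hM i) hw

end

theorem continuousOn_of_hasDerivAt_apply {n : Type*} {s : Set ℝ} {v : ℝ → n → ℝ} {v' : ℝ → n → ℝ}
    (hv : ∀ t ∈ s, ∀ i, HasDerivAt (fun τ => v τ i) (v' t i) t) : ContinuousOn v s :=
  continuousOn_pi.2 fun i t ht => (hv t ht i).continuousAt.continuousWithinAt

theorem statement12_general
    (d d' : ℕ) (T : ℝ) (hT : 0 < T) (lam : ℝ) (hlam : 0 < lam)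
    (C : Matrix (Fin d') (Fin d) ℝ)
    (A : ℝ → Matrix (Fin d) (Fin d) ℝ)
    (r : ℝ → Fin d → ℝ) (ζ : ℝ → Fin d' → ℝ)
    (hr : ∀ i, ContinuousOn (fun t => r t i) (Icc 0 T))
    (hζ : ∀ i, ContinuousOn (fun t => ζ t i) (Icc 0 T))
    (Q : Matrix (Fin d) (Fin d) ℝ)
    (E : ℝ → Matrix (Fin d) (Fin d) ℝ)
    (hE0 : E 0 = Q)
    (hE : ∀ t ∈ Icc (0:ℝ) T, ∀ i j,
      HasDerivAt (fun s => E s i j)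
        ((Cᵀ * C - (A t)ᵀ * E t - E t * A t - (1 / lam) • (E t * E t)) i j) t)
    (hEsymm : ∀ t ∈ Icc (0:ℝ) T, (E t)ᵀ = E t)
    (hET : (E T).PosDef)
    (h : ℝ → Fin d → ℝ)
    (hh0 : h 0 = 0)
    (hh : ∀ t ∈ Icc (0:ℝ) T, ∀ i,
      HasDerivAt (fun s => h s i)
        ((-(((A t)ᵀ + (1 / lam) • E t).mulVec (h t))
          - (Cᵀ.mulVec (ζ t) + (E t).mulVec (r t))) i) t)
    (x₀ : Fin d → ℝ) (u : ℝ → Fin d → ℝ)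
    (hu : ∀ i, ContinuousOn (fun t => u t i) (Icc 0 T))
    (x : ℝ → Fin d → ℝ)
    (hx0 : x 0 = x₀)
    (hx : ∀ t ∈ Icc (0:ℝ) T, ∀ i,
      HasDerivAt (fun s => x s i) (((A t).mulVec (x t) + r t + u t) i) t) :
    x₀ ⬝ᵥ Q.mulVec x₀
      + (∫ t in (0:ℝ)..T, evnorm (ζ t - C.mulVec (x t)) ^ 2)
      + lam * ∫ t in (0:ℝ)..T, evnorm (u t) ^ 2
    ≥ (∫ t in (0:ℝ)..T,
        (evnorm (ζ t) ^ 2 - 2 * (r t ⬝ᵥ h t) - (1 / lam) * evnorm (h t) ^ 2))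
      - h T ⬝ᵥ (E T)⁻¹.mulVec (h T) := by
  set V : ℝ → ℝ := fun s => x s ⬝ᵥ E s *ᵥ x s + 2 * (h s ⬝ᵥ x s)
  have hV : ∀ t ∈ Icc 0 T, HasDerivAt V
      (evnorm (ζ t - C *ᵥ x t) ^ 2 + lam * evnorm (u t) ^ 2
        - (evnorm (ζ t) ^ 2 - 2 * (r t ⬝ᵥ h t) - (1 / lam) * evnorm (h t) ^ 2)
        - lam * evnorm (u t - (1 / lam) • (E t *ᵥ x t + h t)) ^ 2) t := fun t ht => by
    rw [← riccati_completing_square hlam.ne' C (A t) (E t) (hEsymm t ht)]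
    exact (hasDerivAt_dotProduct (hx t ht) (hasDerivAt_mulVec (hE t ht) (hx t ht))).add
      ((hasDerivAt_dotProduct (hh t ht) (hx t ht)).const_mul 2)
  have hxc := continuousOn_of_hasDerivAt_apply hx
  have hhc := continuousOn_of_hasDerivAt_apply hh
  have hζc := continuousOn_pi.2 hζ
  have hrc := continuousOn_pi.2 hr
  have huc := continuousOn_pi.2 hu
  have hcost : V T - V 0 ≤ ∫ t in (0:ℝ)..T, (evnorm (ζ t - C *ᵥ x t) ^ 2 + lam * evnorm (u t) ^ 2
      - (evnorm (ζ t) ^ 2 - 2 * (r t ⬝ᵥ h t) - (1 / lam) * evnorm (h t) ^ 2)) :=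
    sub_le_integral_of_hasDeriv_right_of_le hT.le
      (fun t ht => (hV t ht).continuousAt.continuousWithinAt)
      (fun t ht => (hV t (Ioo_subset_Icc_self ht)).hasDerivWithinAt)
      (ContinuousOn.integrableOn_Icc (by fun_prop))
      fun t _ => sub_le_self _ (mul_nonneg hlam.le (sq_nonneg _))
  have hint : ∀ f : ℝ → ℝ, ContinuousOn f (Icc 0 T) →
      IntervalIntegrable f MeasureTheory.volume 0 T := fun f hf => hf.intervalIntegrable_of_Icc hT.le
  rw [integral_sub (hint _ (by fun_prop)) (hint _ (by fun_prop)),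
    integral_add (hint _ (by fun_prop)) (hint _ (by fun_prop)), integral_const_mul] at hcost
  have hV0 : V 0 = x₀ ⬝ᵥ Q *ᵥ x₀ := by simp [V, hx0, hE0, hh0]
  have hVT := hET.neg_dotProduct_inv_mulVec_le (x T) (h T)
  linarith

/-- the cost of any admissible pair `(x₀, u)` is bounded below by the
closed-form value
`S = ∫₀ᵀ (‖ζ‖² − 2 rᵀh − (1/λ)‖h‖²) dt − h(T)ᵀ E(T)⁻¹ h(T)`. -/
theorem statement12
    (d d' : ℕ) (hd : 1 ≤ d) (hd' : 1 ≤ d') (T : ℝ) (hT : 0 < T) (lam : ℝ) (hlam : 0 < lam)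
    (C : Matrix (Fin d') (Fin d) ℝ)
    (A : ℝ → Matrix (Fin d) (Fin d) ℝ)
    (r : ℝ → Fin d → ℝ) (ζ : ℝ → Fin d' → ℝ)
    (hA : ∀ i j, ContinuousOn (fun t => A t i j) (Icc 0 T))
    (hr : ∀ i, ContinuousOn (fun t => r t i) (Icc 0 T))
    (hζ : ∀ i, ContinuousOn (fun t => ζ t i) (Icc 0 T))
    (Q : Matrix (Fin d) (Fin d) ℝ) (hQ : Q.PosSemidef)
    (E : ℝ → Matrix (Fin d) (Fin d) ℝ)
    (hE0 : E 0 = Q)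
    (hE : ∀ t ∈ Icc (0:ℝ) T, ∀ i j,
      HasDerivAt (fun s => E s i j)
        ((Cᵀ * C - (A t)ᵀ * E t - E t * A t - (1 / lam) • (E t * E t)) i j) t)
    (hEsymm : ∀ t ∈ Icc (0:ℝ) T, (E t)ᵀ = E t)
    (hET : (E T).PosDef)
    (h : ℝ → Fin d → ℝ)
    (hh0 : h 0 = 0)
    (hh : ∀ t ∈ Icc (0:ℝ) T, ∀ i,
      HasDerivAt (fun s => h s i)
        ((-(((A t)ᵀ + (1 / lam) • E t).mulVec (h t))
          - (Cᵀ.mulVec (ζ t) + (E t).mulVec (r t))) i) t)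
    (x₀ : Fin d → ℝ) (u : ℝ → Fin d → ℝ)
    (hu : ∀ i, ContinuousOn (fun t => u t i) (Icc 0 T))
    (x : ℝ → Fin d → ℝ)
    (hx0 : x 0 = x₀)
    (hx : ∀ t ∈ Icc (0:ℝ) T, ∀ i,
      HasDerivAt (fun s => x s i) (((A t).mulVec (x t) + r t + u t) i) t) :
    x₀ ⬝ᵥ Q.mulVec x₀
      + (∫ t in (0:ℝ)..T, evnorm (ζ t - C.mulVec (x t)) ^ 2)
      + lam * ∫ t in (0:ℝ)..T, evnorm (u t) ^ 2
    ≥ (∫ t in (0:ℝ)..T,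
        (evnorm (ζ t) ^ 2 - 2 * (r t ⬝ᵥ h t) - (1 / lam) * evnorm (h t) ^ 2))
      - h T ⬝ᵥ (E T)⁻¹.mulVec (h T) :=
  statement12_general d d' T hT lam hlam C A r ζ hr hζ Q E hE0 hE hEsymm hET h hh0 hh x₀ u hu x hx0
    hx
end
end
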